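/- Let Z_1,…,Z_p be i.i.d. standard Gaussian random variables, μ ∈ R^p, Y = ∑_{i=1}^p (Z_i+μ_i)², λ = ‖μ‖², m = p + λ, and σ = √(2(p+2λ)). Then for all x > 0: Pr[Y ≥ m + σ√(2x) + 2x] ≤ exp(−x). -/

import Mathlib

/-!
Chernoff's method. For `Z ~ N(0, 1)` and `t < 1/2`, completing the square gives
`E exp (t (Z + c)²) = (1 - 2t)^(-1/2) exp (t c² / (1 - 2t))`, and
`-½ log (1 - 2t) ≤ t + t² / (1 - 2t)`.
Multiplying over the independent coordinates shows that `Y` is sub-gamma on the right: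
`log E exp (t (Y - m)) ≤ σ² t² / (2 (1 - 2t))`, and such a bound on the log-moment generating
function yields `P (Y ≥ m + σ √(2x) + 2x) ≤ exp (-x)`.
-/

open MeasureTheory ProbabilityTheory Real

lemma gaussianPDFReal_mul_exp_mul_add_sq {t : ℝ} (ht : t < 1 / 2) (c z : ℝ) :
    gaussianPDFReal 0 1 z * exp (t * (z + c) ^ 2) =
      (√(1 - 2 * t))⁻¹ * exp (t * c ^ 2 / (1 - 2 * t)) *
        gaussianPDFReal (2 * t * c / (1 - 2 * t)) (1 - 2 * t)⁻¹.toNNReal z := by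
  have hu : 0 < 1 - 2 * t := by linarith
  have hsqrt : √(2 * π * (1 - 2 * t)⁻¹) = √(2 * π) / √(1 - 2 * t) := by
    rw [sqrt_mul (by positivity), sqrt_inv, div_eq_mul_inv]
  have hexp : -(z - 0) ^ 2 / 2 + t * (z + c) ^ 2 =
      t * c ^ 2 / (1 - 2 * t) + -(z - 2 * t * c / (1 - 2 * t)) ^ 2 / (2 * (1 - 2 * t)⁻¹) := by
    field_simp
    ring
  simp only [gaussianPDFReal, Real.coe_toNNReal _ (inv_nonneg.2 hu.le), NNReal.coe_one, mul_one,
    hsqrt, inv_div]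
  rw [mul_assoc, ← exp_add, hexp, exp_add]
  field_simp

lemma integrable_exp_mul_add_sq_gaussianReal {t : ℝ} (ht : t < 1 / 2) (c : ℝ) :
    Integrable (fun z ↦ exp (t * (z + c) ^ 2)) (gaussianReal 0 1) := by
  rw [gaussianReal_of_var_ne_zero _ one_ne_zero,
    integrable_withDensity_iff_integrable_smul' (measurable_gaussianPDF 0 1)
      (ae_of_all _ fun _ ↦ gaussianPDF_lt_top)]
  simp only [toReal_gaussianPDF, smul_eq_mul, gaussianPDFReal_mul_exp_mul_add_sq ht]
  exact (integrable_gaussianPDFReal _ _).const_mul _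

lemma integral_exp_mul_add_sq_gaussianReal {t : ℝ} (ht : t < 1 / 2) (c : ℝ) :
    ∫ z, exp (t * (z + c) ^ 2) ∂gaussianReal 0 1 =
      (√(1 - 2 * t))⁻¹ * exp (t * c ^ 2 / (1 - 2 * t)) := by
  have hv : (1 - 2 * t)⁻¹.toNNReal ≠ 0 := by
    simpa using (show 0 < 1 - 2 * t by linarith)
  simp only [integral_gaussianReal_eq_integral_smul one_ne_zero, smul_eq_mul,
    gaussianPDFReal_mul_exp_mul_add_sq ht, integral_const_mul,
    integral_gaussianPDFReal_eq_one _ hv, mul_one]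

lemma inv_sqrt_one_sub_two_mul_le_exp {t : ℝ} (ht0 : 0 ≤ t) (ht : t < 1 / 2) :
    (√(1 - 2 * t))⁻¹ ≤ exp (t + t ^ 2 / (1 - 2 * t)) := by
  set u := 1 - 2 * t
  have hu : 0 < u := by linarith
  -- `-log u ≤ sinh (-log u) = (u⁻¹ - u) / 2`, and `(u⁻¹ - u) / 4 = t + t² / u`
  have hsinh : -log u ≤ (u⁻¹ - u) / 2 := by
    have := self_le_sinh_iff.2 (neg_nonneg.2 (log_nonpos hu.le (by linarith)))
    rwa [sinh_eq, neg_neg, exp_log hu, exp_neg, exp_log hu] at this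
  have hrhs : t + t ^ 2 / u = (u⁻¹ - u) / 4 := by
    rw [show t = (1 - u) / 2 by ring]
    field_simp
    ring
  rw [sqrt_eq_rpow, ← rpow_neg hu.le, rpow_def_of_pos hu, exp_le_exp, hrhs]
  linarith

lemma inv_sqrt_one_sub_two_mul_mul_exp_le {t : ℝ} (ht0 : 0 ≤ t) (ht : t < 1 / 2) (c : ℝ) :
    (√(1 - 2 * t))⁻¹ * exp (t * c ^ 2 / (1 - 2 * t)) ≤
      exp (t * (1 + c ^ 2) + (1 + 2 * c ^ 2) * t ^ 2 / (1 - 2 * t)) := by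
  have hu : 1 - 2 * t ≠ 0 := by linarith
  have hexp : t + t ^ 2 / (1 - 2 * t) + t * c ^ 2 / (1 - 2 * t) =
      t * (1 + c ^ 2) + (1 + 2 * c ^ 2) * t ^ 2 / (1 - 2 * t) := by
    linear_combination (t * c ^ 2) * mul_inv_cancel₀ hu
  rw [← hexp, exp_add]
  gcongr
  exact inv_sqrt_one_sub_two_mul_le_exp ht0 ht

section NoncentralChiSq

variable {Ω : Type*} [MeasurableSpace Ω] {P : Measure Ω}

lemma integrable_exp_mul_sq_add_of_map_eq_gaussianReal {Z : Ω → ℝ} (hZ : AEMeasurable Z P)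
    (hZmap : P.map Z = gaussianReal 0 1) {t : ℝ} (ht : t < 1 / 2) (c : ℝ) :
    Integrable (fun ω ↦ exp (t * (Z ω + c) ^ 2)) P := by
  have h := integrable_exp_mul_add_sq_gaussianReal ht c
  rw [← hZmap, integrable_map_measure (by fun_prop) hZ] at h
  exact h

lemma mgf_sq_add_of_map_eq_gaussianReal {Z : Ω → ℝ} (hZ : AEMeasurable Z P)
    (hZmap : P.map Z = gaussianReal 0 1) {t : ℝ} (ht : t < 1 / 2) (c : ℝ) :
    mgf (fun ω ↦ (Z ω + c) ^ 2) P t =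
      (√(1 - 2 * t))⁻¹ * exp (t * c ^ 2 / (1 - 2 * t)) := by
  rw [← integral_exp_mul_add_sq_gaussianReal ht c, ← hZmap, ← mgf, mgf_map hZ (by fun_prop)]
  rfl

variable {ι : Type*} [Fintype ι] {Z : ι → Ω → ℝ}

lemma integrable_exp_mul_sum_sq_add (hZmeas : ∀ i, Measurable (Z i)) (hZindep : iIndepFun Z P)
    (hZ : ∀ i, P.map (Z i) = gaussianReal 0 1) (μ : ι → ℝ) {t : ℝ} (ht : t < 1 / 2) :
    Integrable (fun ω ↦ exp (t * ∑ i, (Z i ω + μ i) ^ 2)) P := by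
  have := hZindep.isProbabilityMeasure
  have h := (hZindep.comp (fun i z ↦ (z + μ i) ^ 2) fun i ↦ by fun_prop).integrable_exp_mul_sum
    (fun i ↦ by fun_prop) (s := Finset.univ) fun i _ ↦
      integrable_exp_mul_sq_add_of_map_eq_gaussianReal (hZmeas i).aemeasurable (hZ i) ht (μ i)
  simpa only [Finset.sum_apply, Function.comp_apply] using h

lemma mgf_sum_sq_add_le (hZmeas : ∀ i, Measurable (Z i)) (hZindep : iIndepFun Z P)
    (hZ : ∀ i, P.map (Z i) = gaussianReal 0 1) (μ : ι → ℝ) {t : ℝ} (ht0 : 0 ≤ t)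
    (ht : t < 1 / 2) :
    mgf (fun ω ↦ ∑ i, (Z i ω + μ i) ^ 2) P t ≤
      exp (t * (Fintype.card ι + ∑ i, μ i ^ 2) +
        (Fintype.card ι + 2 * ∑ i, μ i ^ 2) * t ^ 2 / (1 - 2 * t)) := by
  have h := (hZindep.comp (fun i z ↦ (z + μ i) ^ 2) fun i ↦ by fun_prop).mgf_sum
    (fun i ↦ by fun_prop) Finset.univ (t := t)
  simp only [Finset.sum_fn, Function.comp_def] at h
  rw [h]
  calc ∏ i, mgf (fun ω ↦ (Z i ω + μ i) ^ 2) P t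
      ≤ ∏ i, exp (t * (1 + μ i ^ 2) + (1 + 2 * μ i ^ 2) * t ^ 2 / (1 - 2 * t)) := by
        gcongr with i
        · exact fun i _ ↦ mgf_nonneg
        rw [mgf_sq_add_of_map_eq_gaussianReal (hZmeas i).aemeasurable (hZ i) ht]
        exact inv_sqrt_one_sub_two_mul_mul_exp_le ht0 ht (μ i)
    _ = _ := by
        rw [← exp_sum]
        congr 1
        simp only [Finset.sum_add_distrib, ← Finset.mul_sum, ← Finset.sum_div,
          Finset.sum_const, Finset.card_univ, nsmul_eq_mul, mul_one, ← Finset.sum_mul]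

end NoncentralChiSq

/-- Chernoff bound for a sub-gamma variable (Boucheron–Lugosi–Massart), evaluated at
`t = s / (σ + c s)` with `s = √(2x)`. -/
theorem measureReal_ge_le_exp_neg_of_mgf_le {Ω : Type*} [MeasurableSpace Ω] {P : Measure Ω}
    [IsFiniteMeasure P] {X : Ω → ℝ} {m σ c x : ℝ} (hσ : 0 < σ) (hc : 0 ≤ c)
    (hx : 0 ≤ x)
    (hint : ∀ t, 0 ≤ t → c * t < 1 → Integrable (fun ω ↦ exp (t * X ω)) P)
    (hmgf : ∀ t, 0 ≤ t → c * t < 1 →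
      mgf X P t ≤ exp (t * m + σ ^ 2 * t ^ 2 / (2 * (1 - c * t)))) :
    P.real {ω | m + σ * √(2 * x) + c * x ≤ X ω} ≤ exp (-x) := by
  set s := √(2 * x)
  have hs : 0 ≤ s := sqrt_nonneg _
  have hx_eq : x = s ^ 2 / 2 := by rw [sq_sqrt (by linarith)]; ring
  have hD : 0 < σ + c * s := by positivity
  set t := s / (σ + c * s) with ht_def
  have ht0 : 0 ≤ t := by positivity
  have hct : 1 - c * t = σ / (σ + c * s) := by
    rw [ht_def]
    field_simp
    ring
  have hct1 : c * t < 1 := by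
    have : 0 < σ / (σ + c * s) := by positivity
    linarith
  have hexponent :
      -t * (m + σ * s + c * x) + (t * m + σ ^ 2 * t ^ 2 / (2 * (1 - c * t))) = -x := by
    rw [hct, hx_eq, ht_def]
    field_simp
    ring
  calc P.real {ω | m + σ * s + c * x ≤ X ω}
      ≤ exp (-t * (m + σ * s + c * x)) * mgf X P t :=
        measure_ge_le_exp_mul_mgf _ ht0 (hint t ht0 hct1)
    _ ≤ exp (-t * (m + σ * s + c * x)) * exp (t * m + σ ^ 2 * t ^ 2 / (2 * (1 - c * t))) := by
        gcongr
        exact hmgf t ht0 hct1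
    _ = exp (-x) := by rw [← exp_add, hexponent]

/-- upper-tail half of Lemma A.4 of the paper, due to Birgé.
For the noncentral chi-squared variable `Y = ∑ (Z i + μ i)²` with `Z i` i.i.d. standard
Gaussians, `λ = ‖μ‖²`, `m = p + λ`, `σ = √(2 (p + 2 λ))`, and every `x > 0`:
`Pr[Y ≥ m + σ √(2x) + 2x] ≤ exp (−x)`. -/
theorem noncentral_chiSq_upper_tail_bound
    {Ω : Type*} [MeasurableSpace Ω] (P : Measure Ω) [IsProbabilityMeasure P]
    {p : ℕ} (Z : Fin p → Ω → ℝ) (hZmeas : ∀ i, Measurable (Z i))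
    (hZindep : iIndepFun Z P)
    (hZ : ∀ i, P.map (Z i) = gaussianReal 0 1)
    (μ : Fin p → ℝ) (lam m σ : ℝ)
    (hlam : lam = ∑ i, (μ i) ^ 2) (hm : m = p + lam)
    (hσ : σ = Real.sqrt (2 * (p + 2 * lam)))
    (x : ℝ) (hx : 0 < x) :
    (P {ω | m + σ * Real.sqrt (2 * x) + 2 * x ≤ ∑ i, (Z i ω + μ i) ^ 2}).toReal ≤
      Real.exp (-x) := by
  rcases Nat.eq_zero_or_pos p with rfl | hp
  · have : ¬ 2 * x ≤ 0 := by linarith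
    simpa [hm, hσ, hlam, this] using (exp_pos (-x)).le
  have hlam0 : 0 ≤ lam := hlam ▸ Finset.sum_nonneg fun i _ ↦ sq_nonneg (μ i)
  have hp1 : (1 : ℝ) ≤ p := by exact_mod_cast hp
  have hσ_pos : 0 < σ := hσ ▸ sqrt_pos.2 (by linarith)
  have hσ_sq : σ ^ 2 = 2 * (p + 2 * lam) := hσ ▸ sq_sqrt (by linarith)
  refine measureReal_ge_le_exp_neg_of_mgf_le hσ_pos zero_le_two hx.le
    (fun t _ ht ↦ integrable_exp_mul_sum_sq_add hZmeas hZindep hZ μ (by linarith))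
    fun t ht0 ht ↦ (mgf_sum_sq_add_le hZmeas hZindep hZ μ ht0 (by linarith)).trans_eq ?_
  rw [Fintype.card_fin, ← hlam, ← hm, hσ_sq]
  congr 1
  field_simp
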